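/- arXiv:2109.01585 — 6 statements merged into one kernel-verified Lean document; each statement's English description precedes it below -/
import Mathlib

section
/- MCSAT simulates one application of the Strong Theory Derivation rule with |C| + 3 rule applications, exactly one of which is a theory rule: if C is a clause with T ⊨ C, C is not a tautology, C ∉ 𝒞, and every literal of C lies in Basis, then there is an MCSAT derivation from ⟨[],𝒞⟩ to ⟨[], 𝒞 ∪ {C}⟩ consisting of |C| applications of Decide (deciding ¬L for each literal L of C), one application of T-Conflict with explanation E = C, one application of Learn, and one application of Restart. -/
/-
Shared formalization of the MCSAT transition system (de Moura–Jovanović,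
extended with a Restart rule) and of the Res*(T) proof system (Robere et al.),
following "On the proof complexity of MCSAT".
-/

namespace MCSATPaper

/-- A signature for a quantifier-free first-order theory `T`:
literals with an involutive negation, theory variables and theory values,
a (partial) evaluation of literals under (partial) theory assignments,
and a finite basis of literals. -/
structure Sig where
  /-- theory literals (constraints and negated constraints) -/
  Lit : Type
  deqLit : DecidableEq Lit
  /-- negation of a literal -/
  neg : Lit → Lit
  /-- theory variables -/
  Var : Type
  deqVar : DecidableEq Var
  /-- theory values -/
  Val : Type
  /-- partial evaluation of a literal under a partial theory assignment
  (`none` = undefined) -/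
  evalLit : Lit → (Var → Option Val) → Option Bool
  /-- the theory variables occurring in a literal -/
  lvars : Lit → Set Var
  /-- the finite basis of literals; all literals ever occurring in proofs
  are contained in it -/
  Basis : Set Lit
  finBasis : Basis.Finite

attribute [instance] Sig.deqLit Sig.deqVar

variable (S : Sig)

/-- A clause is a finite disjunction of literals. -/
abbrev Clause := Finset S.Lit

/-- Standard properties of the signature: negation is involutive, it flips the
(theory) evaluation of a literal, and no literal is defined under the empty
theory assignment. -/
def GoodSig : Prop :=
  (∀ l, S.neg (S.neg l) = l) ∧
  (∀ l f, S.evalLit (S.neg l) f = (S.evalLit l f).map (fun b => !b)) ∧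
  (∀ l, S.evalLit l (fun _ => none) = none)

/-- Trail elements: Boolean decisions, Boolean propagations `C → L`,
theory decisions `x ↦ α`, and theory propagations `E → L`. -/
inductive Elem (S : Sig) where
  | dec (l : S.Lit)
  | prop (c : Clause S) (l : S.Lit)
  | tdec (x : S.Var) (a : S.Val)
  | tprop (e : Clause S) (l : S.Lit)

/-- A trail is a list of trail elements (new elements are appended at the end). -/
abbrev Trail := List (Elem S)

/-- Decisions (Boolean or theory) among trail elements. -/
def Elem.isDecision : Elem S → Prop
  | .dec _ => True
  | .tdec _ _ => True
  | _ => False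

/-- The partial theory assignment induced by the trail. -/
def assign (M : Trail S) (x : S.Var) : Option S.Val :=
  (M.filterMap (fun e => match e with
    | .tdec y a => if y = x then some a else none
    | _ => none)).head?

/-- A literal is on the trail if it was decided or (theory-)propagated. -/
def onTrail (l : S.Lit) (M : Trail S) : Prop :=
  (Elem.dec l) ∈ M ∨ (∃ c, (Elem.prop c l) ∈ M) ∨ (∃ e, (Elem.tprop e l) ∈ M)

open Classical in
/-- `Value(L, M)`: `some true` if `L` is decided/propagated in `M` or evaluates
to true under the theory assignment of `M`, `some false` if `¬L` is
decided/propagated or `L` evaluates to false, and `none` (undef) otherwise. -/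
noncomputable def value (M : Trail S) (l : S.Lit) : Option Bool :=
  if onTrail S l M then some true
  else if onTrail S (S.neg l) M then some false
  else S.evalLit l (assign S M)

/-- A trail is consistent if the Boolean and theory evaluations never contradict. -/
def Consistent (M : Trail S) : Prop :=
  ∀ l, onTrail S l M →
    ¬ onTrail S (S.neg l) M ∧ S.evalLit l (assign S M) ≠ some false

/-- A trail is feasible if its theory assignment can be extended to a full
theory assignment satisfying all literals on the trail. -/
def Feasible (M : Trail S) : Prop :=
  ∃ f : S.Var → S.Val,
    (∀ x a, assign S M x = some a → f x = a) ∧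
    (∀ l, onTrail S l M → S.evalLit l (fun x => some (f x)) = some true)

/-- `Infeasible(M)`. -/
def Infeasible (M : Trail S) : Prop := ¬ Feasible S M

/-- `T ⊨ C`: the clause `C` is valid in the theory, i.e. every full theory
assignment makes some literal of `C` true. -/
def TValid (c : Clause S) : Prop :=
  ∀ f : S.Var → S.Val, ∃ l ∈ c, S.evalLit l (fun x => some (f x)) = some true

/-- A clause is a (propositional) tautology if it contains a literal together
with its negation. -/
def Tauto (c : Clause S) : Prop := ∃ l ∈ c, S.neg l ∈ c

/-- A trail is complete (w.r.t. a clause set) if it assigns a Boolean value to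
every literal and a theory value to every theory variable of the clauses. -/
def CompleteTrail (M : Trail S) (Cs : Set (Clause S)) : Prop :=
  (∀ c ∈ Cs, ∀ l ∈ c, value S M l ≠ none) ∧
  (∀ c ∈ Cs, ∀ l ∈ c, ∀ x ∈ S.lvars l, assign S M x ≠ none)

/-- MCSAT states: search states `⟨M, 𝒞⟩`, conflict states `⟨M, 𝒞⟩ ⊩ C`,
and the two final states `SAT` and `UNSAT`. -/
inductive State (S : Sig) where
  | search (M : Trail S) (Cs : Set (Clause S))
  | conflict (M : Trail S) (Cs : Set (Clause S)) (c : Clause S)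
  | sat
  | unsat

/-- The clauses occurring on a trail as reasons of (theory) propagations. -/
def trailClauses (M : Trail S) : Set (Clause S) :=
  {c | ∃ l, (Elem.prop c l) ∈ M ∨ (Elem.tprop c l) ∈ M}

/-- All clauses occurring in a state: the clause set, reasons of propagations
on the trail, and the conflict clause (if any). -/
def State.clauses : State S → Set (Clause S)
  | .search M Cs => Cs ∪ trailClauses S M
  | .conflict M Cs c => insert c (Cs ∪ trailClauses S M)
  | .sat => ∅
  | .unsat => ∅

/-- The names of the MCSAT proof rules. -/
inductive Rule where
  | decide | propagate | conflict | sat | forget | restart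
  | resolve | consume1 | consume2 | backjump | unsat | learn
  | tPropagate | tDecide | tConflict | tConsume | tBackjumpDecide
  deriving DecidableEq

/-- The theory rules of MCSAT. -/
def Rule.isTheory : Rule → Bool
  | .tPropagate => true | .tDecide => true | .tConflict => true
  | .tConsume => true | .tBackjumpDecide => true
  | _ => false

/-- `resolve(C, D, L)`: the propositional resolvent of the conflict clause `C`
(containing `¬L`) with the reason clause `D` (containing `L`) w.r.t. `L`. -/
def resolvent (c d : Clause S) (l : S.Lit) : Clause S :=
  (c.erase (S.neg l)) ∪ (d.erase l)

/-- The MCSAT transition system of de Moura–Jovanović (with `Restart`),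
parameterized by the initial clause set `C0` (used to identify learned
clauses for `Forget`).  In the rules `T-Propagate` and `T-Conflict` the
clause `E` produced by the `Explain` function is characterized by its
specification: it is a valid theory lemma explaining the infeasibility
(its remaining literals evaluate to false on the trail). -/
inductive Step (C0 : Set (Clause S)) : Rule → State S → State S → Prop
  | decide {M : Trail S} {Cs : Set (Clause S)} {l : S.Lit}
      (hB : l ∈ S.Basis) (hundef : value S M l = none) :
      Step C0 .decide (.search M Cs) (.search (M ++ [Elem.dec l]) Cs)
  | propagate {M : Trail S} {Cs : Set (Clause S)} {c : Clause S} {l : S.Lit}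
      (hc : c ∈ Cs) (hl : l ∈ c)
      (hfalse : ∀ l' ∈ c.erase l, value S M l' = some false)
      (hundef : value S M l = none) :
      Step C0 .propagate (.search M Cs) (.search (M ++ [Elem.prop c l]) Cs)
  | conflict {M : Trail S} {Cs : Set (Clause S)} {c : Clause S}
      (hc : c ∈ Cs) (hfalse : ∀ l ∈ c, value S M l = some false) :
      Step C0 .conflict (.search M Cs) (.conflict M Cs c)
  | sat {M : Trail S} {Cs : Set (Clause S)}
      (hcomp : CompleteTrail S M Cs)
      (hsat : ∀ c ∈ Cs, ∃ l ∈ c, value S M l = some true) :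
      Step C0 .sat (.search M Cs) .sat
  | forget {M : Trail S} {Cs : Set (Clause S)} {c : Clause S}
      (hc : c ∈ Cs) (hlearned : c ∉ C0) :
      Step C0 .forget (.search M Cs) (.search M (Cs \ {c}))
  | restart {M : Trail S} {Cs : Set (Clause S)} {c : Clause S} :
      Step C0 .restart (.conflict M Cs c) (.search [] Cs)
  | resolve {M : Trail S} {Cs : Set (Clause S)} {c d : Clause S} {l : S.Lit}
      (hnl : S.neg l ∈ c) (hl : l ∈ d) :
      Step C0 .resolve (.conflict (M ++ [Elem.prop d l]) Cs c)
        (.conflict M Cs (resolvent S c d l))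
  | consume1 {M : Trail S} {Cs : Set (Clause S)} {c d : Clause S} {l : S.Lit}
      (h : S.neg l ∉ c) :
      Step C0 .consume1 (.conflict (M ++ [Elem.prop d l]) Cs c) (.conflict M Cs c)
  | consume1T {M : Trail S} {Cs : Set (Clause S)} {c e : Clause S} {l : S.Lit}
      (h : S.neg l ∉ c) :
      Step C0 .consume1 (.conflict (M ++ [Elem.tprop e l]) Cs c) (.conflict M Cs c)
  | consume2 {M : Trail S} {Cs : Set (Clause S)} {c : Clause S} {l : S.Lit}
      (h : S.neg l ∉ c) :
      Step C0 .consume2 (.conflict (M ++ [Elem.dec l]) Cs c) (.conflict M Cs c)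
  | backjump {M N : Trail S} {Cs : Set (Clause S)} {c : Clause S} {l : S.Lit}
      (hN : ∃ e, N.head? = some e ∧ Elem.isDecision S e)
      (hl : l ∈ c) (hfalse : ∀ l' ∈ c.erase l, value S M l' = some false)
      (hundef : value S M l = none) :
      Step C0 .backjump (.conflict (M ++ N) Cs c) (.search (M ++ [Elem.prop c l]) Cs)
  | unsat {M : Trail S} {Cs : Set (Clause S)} :
      Step C0 .unsat (.conflict M Cs (∅ : Clause S)) .unsat
  | learn {M : Trail S} {Cs : Set (Clause S)} {c : Clause S} (h : c ∉ Cs) :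
      Step C0 .learn (.conflict M Cs c) (.conflict M (Cs ∪ {c}) c)
  | tPropagate {M : Trail S} {Cs : Set (Clause S)} {e : Clause S} {l : S.Lit}
      (hB : l ∈ S.Basis) (hundef : value S M l = none)
      (hinf : Infeasible S (M ++ [Elem.dec (S.neg l)]))
      (hvalid : TValid S e) (hle : l ∈ e)
      (hfalse : ∀ l' ∈ e.erase l, value S M l' = some false) :
      Step C0 .tPropagate (.search M Cs) (.search (M ++ [Elem.tprop e l]) Cs)
  | tDecide {M : Trail S} {Cs : Set (Clause S)} {x : S.Var} {a : S.Val}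
      (hx : ∃ c ∈ Cs, ∃ l ∈ c, x ∈ S.lvars l)
      (hundef : assign S M x = none)
      (hcons : Consistent S (M ++ [Elem.tdec x a])) :
      Step C0 .tDecide (.search M Cs) (.search (M ++ [Elem.tdec x a]) Cs)
  | tConflict {M : Trail S} {Cs : Set (Clause S)} {e : Clause S}
      (hinf : Infeasible S M) (hvalid : TValid S e)
      (hfalse : ∀ l ∈ e, value S M l = some false) :
      Step C0 .tConflict (.search M Cs) (.conflict M Cs e)
  | tConsume {M : Trail S} {Cs : Set (Clause S)} {c : Clause S} {x : S.Var} {a : S.Val}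
      (hfalse : ∀ l ∈ c, value S M l = some false) :
      Step C0 .tConsume (.conflict (M ++ [Elem.tdec x a]) Cs c) (.conflict M Cs c)
  | tBackjumpDecide {M N : Trail S} {Cs : Set (Clause S)} {c : Clause S}
      {x : S.Var} {a : S.Val} {l : S.Lit}
      (hl : l ∈ c) (hundef : value S M l = none)
      (hother : ∃ l' ∈ c, l' ≠ l ∧ value S M l' = none) :
      Step C0 .tBackjumpDecide (.conflict (M ++ [Elem.tdec x a] ++ N) Cs c)
        (.search (M ++ [Elem.dec l]) Cs)

/-- `Trace S C0 s rules states t`: an MCSAT derivation from state `s` to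
state `t` applying the listed rules and passing through the listed
intermediate states; its length is the number of rule applications. -/
inductive Trace (C0 : Set (Clause S)) : State S → List Rule → List (State S) → State S → Prop
  | refl (s : State S) : Trace C0 s [] [] s
  | step {r : Rule} {s t u : State S} {rs : List Rule} {sts : List (State S)}
      (h1 : Step S C0 r s t) (h2 : Trace C0 t rs sts u) :
      Trace C0 s (r :: rs) (t :: sts) u

/-- The names of the Res*(T) proof rules. -/
inductive ResRule where
  | resolution | strong
  deriving DecidableEq

/-- The Res*(T) proof system on clause sets: `Resolution` derives `C ∨ D`
from `C ∨ l` and `D ∨ ¬l`; `Strong Theory Derivation` adds any clause `C`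
with `T ⊨ C` (possibly containing new literals). -/
inductive ResStep : ResRule → Set (Clause S) → Set (Clause S) → Prop
  | resolution {Γ : Set (Clause S)} {c d : Clause S} {l : S.Lit}
      (hc : c ∈ Γ) (hd : d ∈ Γ) (hl : l ∈ c) (hnl : S.neg l ∈ d) :
      ResStep .resolution Γ (Γ ∪ {c.erase l ∪ d.erase (S.neg l)})
  | strong {Γ : Set (Clause S)} {c : Clause S} (h : TValid S c) :
      ResStep .strong Γ (Γ ∪ {c})

/-- A Res*(T) derivation applying the listed rules; its length is the number
of rule applications. -/
inductive ResDeriv : Set (Clause S) → List ResRule → Set (Clause S) → Prop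
  | refl (Γ : Set (Clause S)) : ResDeriv Γ [] Γ
  | step {Γ Δ Θ : Set (Clause S)} {r : ResRule} {rs : List ResRule}
      (h1 : ResStep S r Γ Δ) (h2 : ResDeriv Δ rs Θ) :
      ResDeriv Γ (r :: rs) Θ

/-!
Decide the negations of the literals of `C` one after another: each decision is legal because
`C` has no repeated or complementary literals, so neither the literal nor its negation is on the
trail yet. On the resulting trail every literal of `C` is false, and since `T ⊨ C` no theory
model satisfies it, so `T-Conflict` applies with `E = C`; `Learn` then adds `C` and `Restart`
clears the trail.
-/

namespace Trace

variable {S : Sig} {C0 : Set (Clause S)}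

lemma append {s t u : State S} {rs₁ rs₂ : List Rule} {sts₁ sts₂ : List (State S)}
    (h₁ : Trace S C0 s rs₁ sts₁ t) (h₂ : Trace S C0 t rs₂ sts₂ u) :
    Trace S C0 s (rs₁ ++ rs₂) (sts₁ ++ sts₂) u := by
  induction h₁ with
  | refl => exact h₂
  | step hs _ ih => exact step hs (ih h₂)

lemma snoc {s t u : State S} {rs : List Rule} {sts : List (State S)} {r : Rule}
    (h : Trace S C0 s rs sts t) (hr : Step S C0 r t u) :
    Trace S C0 s (rs ++ [r]) (sts ++ [u]) u :=
  h.append (step hr (refl u))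

end Trace

section DecisionTrail

variable {S : Sig}

def negDecisions (S : Sig) (xs : List S.Lit) : Trail S :=
  xs.map (fun l => Elem.dec (S.neg l))

lemma onTrail_negDecisions (hS : GoodSig S) (xs : List S.Lit) (l : S.Lit) :
    onTrail S l (negDecisions S xs) ↔ S.neg l ∈ xs := by
  simp only [onTrail, negDecisions, List.mem_map, Elem.dec.injEq, reduceCtorEq, and_false,
    exists_false, or_false]
  constructor
  · rintro ⟨m, hm, rfl⟩
    rwa [hS.1]
  · exact fun h => ⟨S.neg l, h, hS.1 l⟩

lemma assign_negDecisions (xs : List S.Lit) :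
    assign S (negDecisions S xs) = fun _ => none := by
  funext x
  simp [assign, negDecisions, List.filterMap_map]

lemma value_negDecisions (hS : GoodSig S) (xs : List S.Lit) (l : S.Lit) :
    value S (negDecisions S xs) l =
      if S.neg l ∈ xs then some true else if l ∈ xs then some false else none := by
  simp only [value, onTrail_negDecisions hS, hS.1, assign_negDecisions, hS.2.2]

lemma infeasible_negDecisions (hS : GoodSig S) {C : Clause S} (hvalid : TValid S C)
    {xs : List S.Lit} (hC : ∀ l ∈ C, l ∈ xs) : Infeasible S (negDecisions S xs) := by
  rintro ⟨f, -, hf⟩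
  obtain ⟨l, hl, htrue⟩ := hvalid f
  have hneg_true := hf (S.neg l) ((onTrail_negDecisions hS xs _).2 (by rw [hS.1]; exact hC l hl))
  rw [hS.2.1, htrue] at hneg_true
  simp at hneg_true


lemma exists_trace_negDecisions (hS : GoodSig S) (C0 Cs : Set (Clause S)) {xs : List S.Lit}
    (hnodup : xs.Nodup) (hnt : ∀ l ∈ xs, S.neg l ∉ xs) (hB : ∀ l ∈ xs, S.neg l ∈ S.Basis) :
    ∃ sts, Trace S C0 (.search [] Cs) (List.replicate xs.length .decide) sts
      (.search (negDecisions S xs) Cs) := by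
  induction xs using List.reverseRecOn with
  | nil => exact ⟨[], .refl _⟩
  | append_singleton xs m ih =>
    have hm : m ∉ xs := fun h => (List.nodup_append.1 hnodup).2.2 m h m (by simp) rfl
    have hnm : S.neg m ∉ xs := fun h => hnt m (by simp) (by simp [h])
    obtain ⟨sts, htr⟩ := ih hnodup.of_append_left
      (fun l hl h => hnt l (by simp [hl]) (by simp [h])) (fun l hl => hB l (by simp [hl]))
    have hdecide : Step S C0 .decide (.search (negDecisions S xs) Cs)
        (.search (negDecisions S xs ++ [.dec (S.neg m)]) Cs) :=
      .decide (hB m (by simp)) (by simp [value_negDecisions hS, hS.1, hm, hnm])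
    refine ⟨sts ++ [.search (negDecisions S (xs ++ [m])) Cs], ?_⟩
    rw [List.length_append, List.length_singleton, List.replicate_succ']
    simpa [negDecisions] using htr.snoc hdecide

lemma trace_tConflict_learn_restart (C0 : Set (Clause S)) {M : Trail S} {Cs : Set (Clause S)}
    {C : Clause S} (hinf : Infeasible S M) (hvalid : TValid S C)
    (hfalse : ∀ l ∈ C, value S M l = some false) (hnew : C ∉ Cs) :
    Trace S C0 (.search M Cs) [.tConflict, .learn, .restart]
      [.conflict M Cs C, .conflict M (Cs ∪ {C}) C, .search [] (Cs ∪ {C})]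
      (.search [] (Cs ∪ {C})) :=
  .step (.tConflict hinf hvalid hfalse) (.step (.learn hnew) (.step .restart (.refl _)))

end DecisionTrail

/-- MCSAT simulates one application of the Strong Theory
Derivation rule with `|C| + 3` rule applications, exactly one of which is a
theory rule: if `C` is a clause with `T ⊨ C`, `C` is not a tautology,
`C ∉ 𝒞`, and every literal of `C` (and its negation) lies in `Basis`, then
there is an MCSAT derivation from `⟨[], 𝒞⟩` to `⟨[], 𝒞 ∪ {C}⟩` consisting of
`|C|` applications of `Decide` (deciding `¬L` for each literal `L` of `C`),
one application of `T-Conflict` (with explanation `E = C`), one application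
of `Learn`, and one application of `Restart`. -/
theorem mcsat_simulates_strong_theory_derivation (S : Sig) (hS : GoodSig S)
    (C0 Cs : Set (Clause S)) (C : Clause S)
    (hvalid : TValid S C) (hnt : ¬ Tauto S C) (hnew : C ∉ Cs)
    (hBasis : ∀ m ∈ C, m ∈ S.Basis ∧ S.neg m ∈ S.Basis) :
    ∃ sts : List (State S),
      Trace S C0 (State.search ([] : Trail S) Cs)
        (List.replicate C.card Rule.decide ++
          [Rule.tConflict, Rule.learn, Rule.restart])
        sts
        (State.search ([] : Trail S) (Cs ∪ {C})) ∧
      (List.replicate C.card Rule.decide ++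
        [Rule.tConflict, Rule.learn, Rule.restart]).length = C.card + 3 ∧
      (List.replicate C.card Rule.decide ++
        [Rule.tConflict, Rule.learn, Rule.restart]).countP
        (fun r => r.isTheory) = 1 := by
  have hnt_toList : ∀ l ∈ C.toList, S.neg l ∉ C.toList := by simpa [Tauto] using hnt
  obtain ⟨sts, hdecide⟩ := exists_trace_negDecisions hS C0 Cs C.nodup_toList hnt_toList
    (by simpa using fun l hl => (hBasis l hl).2)
  have hfalse : ∀ l ∈ C, value S (negDecisions S C.toList) l = some false := fun l hl => by
    simp [value_negDecisions hS, hl, hnt_toList l (C.mem_toList.2 hl)]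
  have hinf := infeasible_negDecisions hS hvalid (fun l => C.mem_toList.2)
  have htrace := hdecide.append (trace_tConflict_learn_restart C0 hinf hvalid hfalse hnew)
  rw [C.length_toList] at htrace
  exact ⟨_, htrace, by simp, by simp [Rule.isTheory]⟩

end MCSATPaper
end

section
/- If T ⊨ C and the trail M consists exactly of the Boolean decisions ¬L for every literal L of C (starting from the empty trail), then M is infeasible: the decisions on M imply ¬C while C is valid in T, so the theory assignments of M cannot be extended to satisfy all clauses evaluated to true by M; hence the T-Conflict rule is applicable to M with explanation E = C. -/
/-
Shared formalization of the MCSAT transition system (de Moura–Jovanović,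
extended with a Restart rule) and of the Res*(T) proof system (Robere et al.),
following "On the proof complexity of MCSAT".
-/

namespace MCSATPaper

variable (S : Sig)

/-- If `T ⊨ C` and the trail `M` consists exactly of the Boolean
decisions `¬L` for every literal `L` of `C` (starting from the empty trail),
then `M` is infeasible: the decisions on `M` imply `¬C` while `C` is valid in
`T`, so the theory assignment of `M` cannot be extended to a full theory
assignment satisfying the literals on the trail; hence the `T-Conflict` rule
is applicable to `M` with explanation `E = C`. -/
theorem decided_negations_of_valid_clause_infeasible
    (S : Sig) (hS : GoodSig S)
    (C0 Cs : Set (Clause S)) (C : Clause S)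
    (hvalid : TValid S C) (hnt : ¬ Tauto S C)
    (M : Trail S) (hM : M = C.toList.map fun m => Elem.dec (S.neg m)) :
    Infeasible S M ∧
    Step S C0 Rule.tConflict (State.search M Cs) (State.conflict M Cs C) := by
  obtain ⟨hinv, hflip, hnone⟩ := hS
  -- membership characterization
  have hmem : ∀ e, e ∈ M ↔ ∃ m ∈ C, e = Elem.dec (S.neg m) := by
    intro e
    subst hM
    simp [List.mem_map, Finset.mem_toList, eq_comm]
  have honTrail : ∀ l, onTrail S l M ↔ ∃ m ∈ C, l = S.neg m := by
    intro l
    constructor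
    · rintro (h | ⟨c, h⟩ | ⟨c, h⟩) <;>
      · rcases (hmem _).1 h with ⟨m, hm, he⟩
        first
        | exact ⟨m, hm, by injection he⟩
        | cases he
    · rintro ⟨m, hm, rfl⟩
      exact Or.inl ((hmem _).2 ⟨m, hm, rfl⟩)
  have hassign : assign S M = fun _ => none := by
    funext x
    subst hM
    unfold assign
    induction C.toList with
    | nil => rfl
    | cons a t ih => simp only [List.map_cons, List.filterMap_cons]; exact ih
  have hinf : Infeasible S M := by
    rintro ⟨f, _, hsat⟩
    obtain ⟨l, hl, hev⟩ := hvalid f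
    have hon : onTrail S (S.neg l) M := (honTrail _).2 ⟨l, hl, rfl⟩
    have := hsat _ hon
    rw [hflip, hev] at this
    simp at this
  refine ⟨hinf, ?_⟩
  have hfalse : ∀ l ∈ C, value S M l = some false := by
    intro l hl
    have h1 : ¬ onTrail S l M := by
      intro h
      rcases (honTrail _).1 h with ⟨m, hm, rfl⟩
      exact hnt ⟨m, hm, hl⟩
    have h2 : onTrail S (S.neg l) M := (honTrail _).2 ⟨l, hl, rfl⟩
    simp [value, h1, h2]
  exact Step.tConflict hinf hvalid hfalse

end MCSATPaper
end

section
/- MCSAT polynomially simulates Res*(T): for every Res*(T) derivation of length n from an initial clause set 𝒞₀ over the finite basis Basis, with k the maximal number of literals in any clause occurring in the derivation, there is an MCSAT derivation starting from ⟨[],𝒞₀⟩ whose final state is ⟨[], 𝒞₀ ∪ D⟩ where D is the set of clauses derived by the Res*(T) proof, and whose length is at most n·(2k + 5); in particular if the Res*(T) proof derives the empty clause then MCSAT subsequently derives UNSAT. -/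
/-
Shared formalization of the MCSAT transition system (de Moura–Jovanović,
extended with a Restart rule) and of the Res*(T) proof system (Robere et al.),
following "On the proof complexity of MCSAT".
-/

namespace MCSATPaper

variable (S : Sig)

section Simulation

variable {S : Sig}

/-- The trail consisting of the decisions of the negations of the literals in `L`. -/
def decTrail (S : Sig) (L : List S.Lit) : Trail S :=
  L.map (fun l => Elem.dec (S.neg l))

lemma assign_decTrail (S : Sig) (L : List S.Lit) (x : S.Var) :
    assign S (decTrail S L) x = none := by
  unfold assign decTrail
  induction L with
  | nil => rfl
  | cons a t ih => simp [ih]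

lemma assign_decTrail_prop (S : Sig) (L : List S.Lit) (c : Clause S) (l : S.Lit)
    (x : S.Var) : assign S (decTrail S L ++ [Elem.prop c l]) x = none := by
  unfold assign decTrail
  induction L with
  | nil => rfl
  | cons a t ih => simp [ih]

lemma onTrail_decTrail (S : Sig) (hinv : ∀ l, S.neg (S.neg l) = l)
    (m : S.Lit) (L : List S.Lit) :
    onTrail S m (decTrail S L) ↔ S.neg m ∈ L := by
  unfold onTrail decTrail
  simp only [List.mem_map]
  constructor
  · rintro (⟨a, ha, h⟩ | ⟨c, a, ha, h⟩ | ⟨e, a, ha, h⟩)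
    · cases h; rwa [hinv]
    · cases h
    · cases h
  · intro h
    exact Or.inl ⟨S.neg m, h, by rw [hinv]⟩

lemma onTrail_decTrail_prop (S : Sig) (hinv : ∀ l, S.neg (S.neg l) = l)
    (m : S.Lit) (L : List S.Lit) (c : Clause S) (l : S.Lit) :
    onTrail S m (decTrail S L ++ [Elem.prop c l]) ↔ S.neg m ∈ L ∨ m = l := by
  unfold onTrail decTrail
  simp only [List.mem_append, List.mem_map, List.mem_singleton]
  constructor
  · rintro ((⟨a, ha, h⟩ | h) | ⟨d, (⟨a, ha, h⟩ | h)⟩ | ⟨e, (⟨a, ha, h⟩ | h)⟩)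
    · cases h; exact Or.inl (by rwa [hinv])
    · cases h
    · cases h
    · cases h; exact Or.inr rfl
    · cases h
    · cases h
  · rintro (h | rfl)
    · exact Or.inl (Or.inl ⟨S.neg m, h, by rw [hinv]⟩)
    · exact Or.inr (Or.inl ⟨c, Or.inr rfl⟩)

lemma value_decTrail_none (hS : GoodSig S) (L : List S.Lit) (m : S.Lit)
    (h1 : S.neg m ∉ L) (h2 : m ∉ L) :
    value S (decTrail S L) m = none := by
  have hA : ¬ onTrail S m (decTrail S L) := by
    rw [onTrail_decTrail S hS.1]; exact h1
  have hB : ¬ onTrail S (S.neg m) (decTrail S L) := by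
    rw [onTrail_decTrail S hS.1, hS.1]; exact h2
  have hass : assign S (decTrail S L) = fun _ => none :=
    funext (assign_decTrail S L)
  unfold value
  rw [if_neg hA, if_neg hB, hass]
  exact hS.2.2 m

lemma value_decTrail_false (hS : GoodSig S) (L : List S.Lit) (m : S.Lit)
    (h1 : S.neg m ∉ L) (h2 : m ∈ L) :
    value S (decTrail S L) m = some false := by
  have hA : ¬ onTrail S m (decTrail S L) := by
    rw [onTrail_decTrail S hS.1]; exact h1
  have hB : onTrail S (S.neg m) (decTrail S L) := by
    rw [onTrail_decTrail S hS.1, hS.1]; exact h2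
  unfold value
  rw [if_neg hA, if_pos hB]

lemma value_decTrail_prop_none (hS : GoodSig S) (L : List S.Lit) (m : S.Lit)
    (c : Clause S) (l : S.Lit)
    (h1 : S.neg m ∉ L) (h1' : m ≠ l) (h2 : m ∉ L) (h2' : S.neg m ≠ l) :
    value S (decTrail S L ++ [Elem.prop c l]) m = none := by
  have hA : ¬ onTrail S m (decTrail S L ++ [Elem.prop c l]) := by
    rw [onTrail_decTrail_prop S hS.1]; rintro (h | h) <;> [exact h1 h; exact h1' h]
  have hB : ¬ onTrail S (S.neg m) (decTrail S L ++ [Elem.prop c l]) := by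
    rw [onTrail_decTrail_prop S hS.1, hS.1]; rintro (h | h) <;> [exact h2 h; exact h2' h]
  have hass : assign S (decTrail S L ++ [Elem.prop c l]) = fun _ => none :=
    funext (assign_decTrail_prop S L c l)
  unfold value
  rw [if_neg hA, if_neg hB, hass]
  exact hS.2.2 m

lemma value_decTrail_prop_false (hS : GoodSig S) (L : List S.Lit) (m : S.Lit)
    (c : Clause S) (l : S.Lit)
    (h1 : S.neg m ∉ L) (h1' : m ≠ l) (h2 : m ∈ L ∨ S.neg m = l) :
    value S (decTrail S L ++ [Elem.prop c l]) m = some false := by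
  have hA : ¬ onTrail S m (decTrail S L ++ [Elem.prop c l]) := by
    rw [onTrail_decTrail_prop S hS.1]; rintro (h | h) <;> [exact h1 h; exact h1' h]
  have hB : onTrail S (S.neg m) (decTrail S L ++ [Elem.prop c l]) := by
    rw [onTrail_decTrail_prop S hS.1, hS.1]; exact h2
  unfold value
  rw [if_neg hA, if_pos hB]

lemma trace_append {C0 : Set (Clause S)} {s t u : State S} {rs1 : List Rule}
    {sts1 : List (State S)} (h1 : Trace S C0 s rs1 sts1 t) :
    ∀ {rs2 sts2}, Trace S C0 t rs2 sts2 u →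
      Trace S C0 s (rs1 ++ rs2) (sts1 ++ sts2) u := by
  induction h1 with
  | refl => intro _ _ h2; exact h2
  | step h _ ih => intro _ _ h2; exact Trace.step h (ih h2)

lemma trace_decides (hS : GoodSig S) (C0 Δ : Set (Clause S)) (L0 : List S.Lit)
    (hnd : L0.Nodup) (hnt : ∀ l ∈ L0, S.neg l ∉ L0) (hB : ∀ l ∈ L0, S.neg l ∈ S.Basis) :
    ∀ (L P : List S.Lit), P ++ L = L0 →
      ∃ sts, Trace S C0 (.search (decTrail S P) Δ)
        (List.replicate L.length .decide) sts (.search (decTrail S L0) Δ) := by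
  intro L
  induction L with
  | nil =>
    intro P hP
    rw [List.append_nil] at hP
    subst hP
    exact ⟨[], Trace.refl _⟩
  | cons a t ih =>
    intro P hP
    have haL0 : a ∈ L0 := by rw [← hP]; simp
    have haP : a ∉ P := by
      rw [← hP] at hnd
      exact fun h => (List.disjoint_of_nodup_append hnd) h (by simp)
    have hnaP : S.neg a ∉ P := fun h =>
      hnt a haL0 (by rw [← hP]; exact List.mem_append_left _ h)
    have hstep : Step S C0 .decide (.search (decTrail S P) Δ)
        (.search (decTrail S P ++ [Elem.dec (S.neg a)]) Δ) :=
      Step.decide (hB a haL0)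
        (value_decTrail_none hS P (S.neg a) (by rwa [hS.1]) hnaP)
    have heq : decTrail S P ++ [Elem.dec (S.neg a)] = decTrail S (P ++ [a]) := by
      simp [decTrail]
    rw [heq] at hstep
    obtain ⟨sts, htr⟩ := ih (P ++ [a]) (by simpa using hP)
    exact ⟨_, Trace.step hstep htr⟩

lemma trace_decides_clause (hS : GoodSig S) (C0 Δ : Set (Clause S)) (c : Clause S)
    (hnt : ¬ Tauto S c) (hB : ∀ l ∈ c, l ∈ S.Basis)
    (hBneg : ∀ l ∈ S.Basis, S.neg l ∈ S.Basis) :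
    ∃ sts, Trace S C0 (.search ([] : Trail S) Δ)
      (List.replicate c.card .decide) sts (.search (decTrail S c.toList) Δ) := by
  have h := trace_decides (S := S) hS C0 Δ c.toList c.nodup_toList
    (fun l hl hnl => hnt ⟨l, Finset.mem_toList.mp hl, Finset.mem_toList.mp hnl⟩)
    (fun l hl => hBneg l (hB l (Finset.mem_toList.mp hl)))
    c.toList [] rfl
  rw [Finset.length_toList] at h
  exact h
lemma sim_strong (hS : GoodSig S) (C0 Δ : Set (Clause S)) (c : Clause S)
    (hvalid : TValid S c) (hnt : ¬ Tauto S c) (hB : ∀ l ∈ c, l ∈ S.Basis)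
    (hBneg : ∀ l ∈ S.Basis, S.neg l ∈ S.Basis) (hnew : c ∉ Δ) :
    ∃ rs sts, Trace S C0 (.search ([] : Trail S) Δ) rs sts
      (.search ([] : Trail S) (Δ ∪ {c})) ∧ rs.length = c.card + 3 := by
  obtain ⟨sts1, htr1⟩ := trace_decides_clause hS C0 Δ c hnt hB hBneg
  set M := decTrail S c.toList with hM
  have hfalse : ∀ l ∈ c, value S M l = some false := fun l hl =>
    value_decTrail_false hS c.toList l
      (fun h => hnt ⟨l, hl, Finset.mem_toList.mp h⟩) (Finset.mem_toList.mpr hl)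
  have hinf : Infeasible S M := by
    rintro ⟨f, hf1, hf2⟩
    obtain ⟨l, hl, hev⟩ := hvalid f
    have hon : onTrail S (S.neg l) M := by
      rw [hM, onTrail_decTrail S hS.1, hS.1]
      exact Finset.mem_toList.mpr hl
    have := hf2 _ hon
    rw [hS.2.1, hev] at this
    simp at this
  have h1 : Step S C0 .tConflict (.search M Δ) (.conflict M Δ c) :=
    Step.tConflict hinf hvalid hfalse
  have h2 : Step S C0 .learn (.conflict M Δ c) (.conflict M (Δ ∪ {c}) c) :=
    Step.learn hnew
  have h3 : Step S C0 .restart (.conflict M (Δ ∪ {c}) c)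
      (.search ([] : Trail S) (Δ ∪ {c})) := Step.restart
  refine ⟨_, _, trace_append htr1
    (Trace.step h1 (Trace.step h2 (Trace.step h3 (Trace.refl _)))), ?_⟩
  simp

lemma sim_res (hS : GoodSig S) (C0 Δ : Set (Clause S)) (c1 c2 : Clause S) (l : S.Lit)
    (hc1 : c1 ∈ Δ) (hc2 : c2 ∈ Δ) (hl : l ∈ c1) (hnl : S.neg l ∈ c2)
    (hnt1 : ¬ Tauto S c1) (hnt2 : ¬ Tauto S c2)
    (hntc : ¬ Tauto S (c1.erase l ∪ c2.erase (S.neg l)))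
    (hB : ∀ m ∈ c1.erase l ∪ c2.erase (S.neg l), m ∈ S.Basis)
    (hBneg : ∀ m ∈ S.Basis, S.neg m ∈ S.Basis)
    (hnew : c1.erase l ∪ c2.erase (S.neg l) ∉ Δ) :
    ∃ rs sts, Trace S C0 (.search ([] : Trail S) Δ) rs sts
      (.search ([] : Trail S) (Δ ∪ {c1.erase l ∪ c2.erase (S.neg l)})) ∧
      rs.length = (c1.erase l ∪ c2.erase (S.neg l)).card + 5 := by
  set c : Clause S := c1.erase l ∪ c2.erase (S.neg l) with hc
  have hlc : l ∉ c := by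
    rw [hc]
    simp only [Finset.mem_union, Finset.mem_erase]
    rintro (⟨h, _⟩ | ⟨_, h⟩)
    · exact h rfl
    · exact hnt2 ⟨l, h, hnl⟩
  have hnlc : S.neg l ∉ c := by
    rw [hc]
    simp only [Finset.mem_union, Finset.mem_erase]
    rintro (⟨_, h⟩ | ⟨h, _⟩)
    · exact hnt1 ⟨l, hl, h⟩
    · exact h rfl
  have hlne : l ≠ S.neg l := fun h => hnt1 ⟨l, hl, h ▸ hl⟩
  have hsub1 : c1.erase l ⊆ c := Finset.subset_union_left
  have hsub2 : c2.erase (S.neg l) ⊆ c := Finset.subset_union_right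
  obtain ⟨sts1, htr1⟩ := trace_decides_clause hS C0 Δ c hntc hB hBneg
  set M := decTrail S c.toList with hM
  have hmemL : ∀ m ∈ c, m ∈ c.toList := fun m hm => Finset.mem_toList.mpr hm
  have hnegL : ∀ m ∈ c, S.neg m ∉ c.toList := fun m hm h =>
    hntc ⟨m, hm, Finset.mem_toList.mp h⟩
  -- propagate c1, l
  have hstep1 : Step S C0 .propagate (.search M Δ)
      (.search (M ++ [Elem.prop c1 l]) Δ) := by
    refine Step.propagate hc1 hl (fun m hm => ?_) ?_
    · have hmc : m ∈ c := hsub1 hm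
      exact value_decTrail_false hS _ m (hnegL m hmc) (hmemL m hmc)
    · exact value_decTrail_none hS _ l
        (fun h => hnlc (Finset.mem_toList.mp h))
        (fun h => hlc (Finset.mem_toList.mp h))
  -- conflict c2
  have hstep2 : Step S C0 .conflict (.search (M ++ [Elem.prop c1 l]) Δ)
      (.conflict (M ++ [Elem.prop c1 l]) Δ c2) := by
    refine Step.conflict hc2 (fun m hm => ?_)
    by_cases hml : m = S.neg l
    · subst hml
      refine value_decTrail_prop_false hS _ _ c1 l ?_ ?_ (Or.inr (hS.1 l))
      · rw [hS.1]; intro h; exact hlc (Finset.mem_toList.mp h)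
      · exact fun h => hlne h.symm
    · have hmc : m ∈ c := hsub2 (Finset.mem_erase.mpr ⟨hml, hm⟩)
      refine value_decTrail_prop_false hS _ _ c1 l (hnegL m hmc) ?_
        (Or.inl (hmemL m hmc))
      · rintro rfl; exact hlc hmc
  -- resolve
  have hres : resolvent S c2 c1 l = c := by
    rw [resolvent, hc, Finset.union_comm]
  have hstep3 : Step S C0 .resolve (.conflict (M ++ [Elem.prop c1 l]) Δ c2)
      (.conflict M Δ c) := hres ▸ Step.resolve hnl hl
  have hstep4 : Step S C0 .learn (.conflict M Δ c) (.conflict M (Δ ∪ {c}) c) :=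
    Step.learn hnew
  have hstep5 : Step S C0 .restart (.conflict M (Δ ∪ {c}) c)
      (.search ([] : Trail S) (Δ ∪ {c})) := Step.restart
  refine ⟨_, _, trace_append htr1 (Trace.step hstep1 (Trace.step hstep2
    (Trace.step hstep3 (Trace.step hstep4 (Trace.step hstep5 (Trace.refl _)))))), ?_⟩
  simp

lemma resStep_subset {r : ResRule} {Γ Δ : Set (Clause S)}
    (h : ResStep S r Γ Δ) : Γ ⊆ Δ := by
  cases h <;> exact Set.subset_union_left

lemma resDeriv_subset {Γ Δ : Set (Clause S)} {rr : List ResRule}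
    (h : ResDeriv S Γ rr Δ) : Γ ⊆ Δ := by
  induction h with
  | refl => exact subset_rfl
  | step h1 _ ih => exact (resStep_subset h1).trans ih

lemma sim_deriv (hS : GoodSig S)
    (hBneg : ∀ l ∈ S.Basis, S.neg l ∈ S.Basis)
    (C0 : Set (Clause S)) (k : ℕ) {Δ Γ : Set (Clause S)} {rr : List ResRule}
    (hderiv : ResDeriv S Δ rr Γ)
    (hBasis : ∀ c ∈ Γ, ∀ l ∈ c, l ∈ S.Basis)
    (hnt : ∀ c ∈ Γ, ¬ Tauto S c)
    (hk : ∀ c ∈ Γ, c.card ≤ k) :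
    ∃ rs sts, Trace S C0 (.search ([] : Trail S) Δ) rs sts
      (.search ([] : Trail S) Γ) ∧ rs.length ≤ rr.length * (2 * k + 5) := by
  induction hderiv with
  | refl Γ => exact ⟨[], [], Trace.refl _, by simp⟩
  | @step Δ Δ' Γ r rs h1 h2 ih =>
    obtain ⟨rs2, sts2, htr2, hlen2⟩ := ih hBasis hnt hk
    have hΔ'Γ : Δ' ⊆ Γ := resDeriv_subset h2
    have key : ∃ rs1 sts1, Trace S C0 (.search ([] : Trail S) Δ) rs1 sts1
        (.search ([] : Trail S) Δ') ∧ rs1.length ≤ 2 * k + 5 := by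
      cases h1 with
      | @resolution _ c1 c2 l hc1 hc2 hl hnl =>
        set c : Clause S := c1.erase l ∪ c2.erase (S.neg l) with hcdef
        have hcΓ : c ∈ Γ := hΔ'Γ (Set.mem_union_right _ rfl)
        by_cases hcΔ : c ∈ Δ
        · have : Δ ∪ {c} = Δ :=
            Set.union_eq_self_of_subset_right (Set.singleton_subset_iff.mpr hcΔ)
          rw [this]
          exact ⟨[], [], Trace.refl _, by simp⟩
        · obtain ⟨rs1, sts1, htr1, hlen1⟩ := sim_res hS C0 Δ c1 c2 l hc1 hc2 hl hnl
            (hnt c1 (hΔ'Γ (Set.mem_union_left _ hc1)))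
            (hnt c2 (hΔ'Γ (Set.mem_union_left _ hc2)))
            (hnt c hcΓ) (hBasis c hcΓ) hBneg hcΔ
          refine ⟨rs1, sts1, htr1, ?_⟩
          rw [hlen1, ← hcdef]
          have := hk c hcΓ
          omega
      | @strong _ c hvalid =>
        have hcΓ : c ∈ Γ := hΔ'Γ (Set.mem_union_right _ rfl)
        by_cases hcΔ : c ∈ Δ
        · have : Δ ∪ {c} = Δ :=
            Set.union_eq_self_of_subset_right (Set.singleton_subset_iff.mpr hcΔ)
          rw [this]
          exact ⟨[], [], Trace.refl _, by simp⟩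
        · obtain ⟨rs1, sts1, htr1, hlen1⟩ := sim_strong hS C0 Δ c hvalid
            (hnt c hcΓ) (hBasis c hcΓ) hBneg hcΔ
          refine ⟨rs1, sts1, htr1, ?_⟩
          rw [hlen1]
          have := hk c hcΓ
          omega
    obtain ⟨rs1, sts1, htr1, hlen1⟩ := key
    refine ⟨rs1 ++ rs2, sts1 ++ sts2, trace_append htr1 htr2, ?_⟩
    rw [List.length_append, List.length_cons]
    calc rs1.length + rs2.length ≤ (2 * k + 5) + rs.length * (2 * k + 5) := by omega
    _ = (rs.length + 1) * (2 * k + 5) := by ring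

end Simulation
/-- MCSAT polynomially simulates Res*(T): for every Res*(T)
derivation of length `n` from an initial clause set `𝒞₀` over the finite
basis `Basis`, with `k` the maximal number of literals in any clause occurring
in the derivation, there is an MCSAT derivation starting from `⟨[], 𝒞₀⟩`
whose final state is `⟨[], 𝒞₀ ∪ D⟩`, where `D` is the set of clauses derived
by the Res*(T) proof, and whose length is at most `n·(2k + 5)`; in particular
if the Res*(T) proof derives the empty clause then MCSAT subsequently derives
`UNSAT`. -/
theorem mcsat_polynomially_simulates_resStarT (S : Sig) (hS : GoodSig S)
    (hBasisNeg : ∀ l ∈ S.Basis, S.neg l ∈ S.Basis)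
    (C0 Γ : Set (Clause S)) (rr : List ResRule) (k : ℕ)
    (hderiv : ResDeriv S C0 rr Γ)
    (hBasis : ∀ c ∈ Γ, ∀ l ∈ c, l ∈ S.Basis)
    (hnt : ∀ c ∈ Γ, ¬ Tauto S c)
    (hk : ∀ c ∈ Γ, c.card ≤ k) :
    ∃ (D : Set (Clause S)) (rs : List Rule) (sts : List (State S)),
      Γ = C0 ∪ D ∧
      Trace S C0 (State.search ([] : Trail S) C0) rs sts
        (State.search ([] : Trail S) (C0 ∪ D)) ∧
      rs.length ≤ rr.length * (2 * k + 5) ∧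
      ((∅ : Clause S) ∈ Γ →
        ∃ (rs' : List Rule) (sts' : List (State S)),
          Trace S C0 (State.search ([] : Trail S) (C0 ∪ D)) rs' sts'
            (State.unsat : State S)) := by
  have hsub : C0 ⊆ Γ := resDeriv_subset hderiv
  have hΓ : Γ = C0 ∪ (Γ \ C0) := (Set.union_diff_cancel hsub).symm
  obtain ⟨rs, sts, htr, hlen⟩ := sim_deriv hS hBasisNeg C0 k hderiv hBasis hnt hk
  refine ⟨Γ \ C0, rs, sts, hΓ, by rwa [← hΓ], hlen, ?_⟩
  intro hempty
  refine ⟨[.conflict, .unsat], _,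
    Trace.step (Step.conflict (c := (∅ : Clause S)) ?_ ?_)
      (Trace.step Step.unsat (Trace.refl _))⟩
  · rw [← hΓ]; exact hempty
  · intro l hl; exact absurd hl (Finset.notMem_empty l)

end MCSATPaper
end

section
/- In the MCSAT transition system, the only rules whose application can introduce a clause not already present in the current state are Resolve, T-Propagate, and T-Conflict; every other rule (Decide, Propagate, Conflict, Sat, Consume₁, Consume₂, Backjump, Unsat, Learn, Forget, Restart, T-Decide, T-Consume, T-Backjump-Decide) either manipulates no clauses, moves clauses between the clause set 𝒞, the trail M, and the conflict-clause position, or removes clauses from the current state. -/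
/-
Shared formalization of the MCSAT transition system (de Moura–Jovanović,
extended with a Restart rule) and of the Res*(T) proof system (Robere et al.),
following "On the proof complexity of MCSAT".
-/

namespace MCSATPaper

variable (S : Sig)

/-- In the MCSAT transition system, the only rules whose
application can introduce a clause not already present in the current state
are `Resolve`, `T-Propagate` and `T-Conflict`: for every application of any
other rule (`Decide`, `Propagate`, `Conflict`, `Sat`, `Consume₁`, `Consume₂`,
`Backjump`, `Unsat`, `Learn`, `Forget`, `Restart`, `T-Decide`, `T-Consume`,
`T-Backjump-Decide`), every clause occurring in the result state (in the
clause set, as the reason of a propagation on the trail, or as conflict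
clause) already occurs in the source state — these rules only manipulate no
clauses, move clauses between the three places, or remove clauses. -/
theorem only_resolve_tPropagate_tConflict_introduce_clauses
    (S : Sig) (C0 : Set (Clause S))
    (r : Rule) (s t : State S) (hstep : Step S C0 r s t)
    (h1 : r ≠ Rule.resolve) (h2 : r ≠ Rule.tPropagate) (h3 : r ≠ Rule.tConflict) :
    State.clauses S t ⊆ State.clauses S s := by
  cases hstep <;>
    first
    | exact absurd rfl h1
    | exact absurd rfl h2
    | exact absurd rfl h3
    | (intro x hx
       simp only [State.clauses, trailClauses, Set.mem_union, Set.mem_insert_iff,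
         Set.mem_setOf_eq, List.mem_append, List.mem_cons, List.mem_singleton,
         Set.mem_diff, Set.mem_singleton_iff] at hx ⊢ <;>
       aesop)

end MCSATPaper
end

section
/- Res*(T) polynomially simulates MCSAT: for every MCSAT derivation from the initial state ⟨[],𝒞₀⟩, there is a Res*(T) derivation from 𝒞₀ whose length is at most the number of MCSAT rule applications, such that every clause that occurs in any state of the MCSAT derivation (in the clause set, on the trail as a propagation reason, or as conflict clause) belongs to 𝒞₀ or is derived by the Res*(T) derivation; the simulation uses one Resolution step per MCSAT Resolve step and one Strong Theory Derivation step per MCSAT T-Propagate or T-Conflict step, and no steps for any other MCSAT rule. In particular, if the MCSAT derivation ends with the Unsat rule, the Res*(T) derivation derives the empty clause. -/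
/-
Shared formalization of the MCSAT transition system (de Moura–Jovanović,
extended with a Restart rule) and of the Res*(T) proof system (Robere et al.),
following "On the proof complexity of MCSAT".
-/

namespace MCSATPaper

variable (S : Sig)

lemma trailClauses_nil (S : Sig) : trailClauses S ([] : Trail S) = ∅ := by
  ext c; simp [trailClauses]

lemma trailClauses_append (S : Sig) (M N : Trail S) :
    trailClauses S (M ++ N) = trailClauses S M ∪ trailClauses S N := by
  ext c
  simp only [trailClauses, Set.mem_setOf_eq, List.mem_append, Set.mem_union]
  constructor
  · rintro ⟨l, (h | h) | (h | h)⟩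
    · exact Or.inl ⟨l, Or.inl h⟩
    · exact Or.inr ⟨l, Or.inl h⟩
    · exact Or.inl ⟨l, Or.inr h⟩
    · exact Or.inr ⟨l, Or.inr h⟩
  · rintro (⟨l, h | h⟩ | ⟨l, h | h⟩)
    · exact ⟨l, Or.inl (Or.inl h)⟩
    · exact ⟨l, Or.inr (Or.inl h)⟩
    · exact ⟨l, Or.inl (Or.inr h)⟩
    · exact ⟨l, Or.inr (Or.inr h)⟩

lemma trailClauses_dec (S : Sig) (l : S.Lit) :
    trailClauses S [Elem.dec l] = ∅ := by
  ext c; simp [trailClauses]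

lemma trailClauses_tdec (S : Sig) (x : S.Var) (a : S.Val) :
    trailClauses S [Elem.tdec x a] = ∅ := by
  ext c; simp [trailClauses]

lemma trailClauses_prop (S : Sig) (c : Clause S) (l : S.Lit) :
    trailClauses S [Elem.prop c l] = {c} := by
  ext d
  simp only [trailClauses, Set.mem_setOf_eq, List.mem_singleton, Set.mem_singleton_iff]
  constructor
  · rintro ⟨l', h | h⟩ <;> first
      | (cases h; rfl)
      | (exfalso; cases h)
  · rintro rfl; exact ⟨l, Or.inl rfl⟩

lemma trailClauses_tprop (S : Sig) (c : Clause S) (l : S.Lit) :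
    trailClauses S [Elem.tprop c l] = {c} := by
  ext d
  simp only [trailClauses, Set.mem_setOf_eq, List.mem_singleton, Set.mem_singleton_iff]
  constructor
  · rintro ⟨l', h | h⟩ <;> first
      | (cases h; rfl)
      | (exfalso; cases h)
  · rintro rfl; exact ⟨l, Or.inr rfl⟩

theorem sim_aux (S : Sig) (C0 : Set (Clause S)) {s : State S} {rs : List Rule}
    {sts : List (State S)} {t : State S}
    (htrace : Trace S C0 s rs sts t) :
    ∀ Γ : Set (Clause S), State.clauses S s ⊆ Γ →
      (s = (State.unsat : State S) → (∅ : Clause S) ∈ Γ) →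
    ∃ (Γ' : Set (Clause S)) (rr : List ResRule),
      ResDeriv S Γ rr Γ' ∧
      rr.count ResRule.resolution = rs.count Rule.resolve ∧
      rr.count ResRule.strong = rs.count Rule.tPropagate + rs.count Rule.tConflict ∧
      rr.length ≤ rs.length ∧ Γ ⊆ Γ' ∧
      (∀ u ∈ sts, State.clauses S u ⊆ Γ') ∧
      (t = (State.unsat : State S) → (∅ : Clause S) ∈ Γ') := by
  induction htrace with
  | refl s =>
    intro Γ hsub hun
    exact ⟨Γ, [], ResDeriv.refl Γ, rfl, rfl, le_refl _, subset_rfl, by simp, hun⟩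
  | @step r s t' u rs' sts' h1 h2 ih =>
    intro Γ hsub hun
    -- We handle each MCSAT rule.
    cases h1 with
    | @decide M Cs l hB hundef =>
      obtain ⟨Γ', rr, hder, hc1, hc2, hlen, hmono, hall, hU⟩ := ih Γ
        (by
          intro x hx
          apply hsub
          simpa [State.clauses, trailClauses_append, trailClauses_dec] using hx)
        (fun h => by simp at h)
      refine ⟨Γ', rr, hder, ?_, ?_, ?_, hmono, ?_, hU⟩
      · simpa [List.count_cons] using hc1
      · simpa [List.count_cons] using hc2
      · simpa using Nat.le_succ_of_le hlen
      · intro v hv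
        rcases List.mem_cons.mp hv with rfl | hv
        · intro x hx
          apply hmono; apply hsub
          simpa [State.clauses, trailClauses_append, trailClauses_dec] using hx
        · exact hall v hv
    | @propagate M Cs c l hc hl hfalse hundef =>
      obtain ⟨Γ', rr, hder, hc1, hc2, hlen, hmono, hall, hU⟩ := ih Γ
        (by
          intro x hx
          apply hsub
          simp only [State.clauses, trailClauses_append, trailClauses_prop,
            Set.mem_union, Set.mem_singleton_iff] at hx ⊢
          rcases hx with h | h | rfl
          · exact Or.inl h
          · exact Or.inr h
          · exact Or.inl hc)
        (fun h => by simp at h)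
      refine ⟨Γ', rr, hder, ?_, ?_, ?_, hmono, ?_, hU⟩
      · simpa [List.count_cons] using hc1
      · simpa [List.count_cons] using hc2
      · simpa using Nat.le_succ_of_le hlen
      · intro v hv
        rcases List.mem_cons.mp hv with rfl | hv
        · intro x hx
          apply hmono; apply hsub
          simp only [State.clauses, trailClauses_append, trailClauses_prop,
            Set.mem_union, Set.mem_singleton_iff] at hx ⊢
          rcases hx with h | h | rfl
          · exact Or.inl h
          · exact Or.inr h
          · exact Or.inl hc
        · exact hall v hv
    | @conflict M Cs c hc hfalse =>
      obtain ⟨Γ', rr, hder, hc1, hc2, hlen, hmono, hall, hU⟩ := ih Γ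
        (by
          intro x hx
          apply hsub
          simp only [State.clauses, Set.mem_insert_iff, Set.mem_union] at hx ⊢
          rcases hx with rfl | h | h
          · exact Or.inl hc
          · exact Or.inl h
          · exact Or.inr h)
        (fun h => by simp at h)
      refine ⟨Γ', rr, hder, ?_, ?_, ?_, hmono, ?_, hU⟩
      · simpa [List.count_cons] using hc1
      · simpa [List.count_cons] using hc2
      · simpa using Nat.le_succ_of_le hlen
      · intro v hv
        rcases List.mem_cons.mp hv with rfl | hv
        · intro x hx
          apply hmono; apply hsub
          simp only [State.clauses, Set.mem_insert_iff, Set.mem_union] at hx ⊢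
          rcases hx with rfl | h | h
          · exact Or.inl hc
          · exact Or.inl h
          · exact Or.inr h
        · exact hall v hv
    | @sat M Cs hcomp hsat =>
      obtain ⟨Γ', rr, hder, hc1, hc2, hlen, hmono, hall, hU⟩ := ih Γ
        (by intro x hx; simp [State.clauses] at hx)
        (fun h => by simp at h)
      refine ⟨Γ', rr, hder, ?_, ?_, ?_, hmono, ?_, hU⟩
      · simpa [List.count_cons] using hc1
      · simpa [List.count_cons] using hc2
      · simpa using Nat.le_succ_of_le hlen
      · intro v hv
        rcases List.mem_cons.mp hv with rfl | hv
        · intro x hx; simp [State.clauses] at hx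
        · exact hall v hv
    | @forget M Cs c hc hlearned =>
      obtain ⟨Γ', rr, hder, hc1, hc2, hlen, hmono, hall, hU⟩ := ih Γ
        (by
          intro x hx
          apply hsub
          simp only [State.clauses, Set.mem_union, Set.mem_diff] at hx ⊢
          tauto)
        (fun h => by simp at h)
      refine ⟨Γ', rr, hder, ?_, ?_, ?_, hmono, ?_, hU⟩
      · simpa [List.count_cons] using hc1
      · simpa [List.count_cons] using hc2
      · simpa using Nat.le_succ_of_le hlen
      · intro v hv
        rcases List.mem_cons.mp hv with rfl | hv
        · intro x hx
          apply hmono; apply hsub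
          simp only [State.clauses, Set.mem_union, Set.mem_diff] at hx ⊢
          tauto
        · exact hall v hv
    | @restart M Cs c =>
      obtain ⟨Γ', rr, hder, hc1, hc2, hlen, hmono, hall, hU⟩ := ih Γ
        (by
          intro x hx
          apply hsub
          simp only [State.clauses, trailClauses_nil, Set.mem_union,
            Set.mem_insert_iff, Set.mem_empty_iff_false, or_false] at hx ⊢
          tauto)
        (fun h => by simp at h)
      refine ⟨Γ', rr, hder, ?_, ?_, ?_, hmono, ?_, hU⟩
      · simpa [List.count_cons] using hc1
      · simpa [List.count_cons] using hc2
      · simpa using Nat.le_succ_of_le hlen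
      · intro v hv
        rcases List.mem_cons.mp hv with rfl | hv
        · intro x hx
          apply hmono; apply hsub
          simp only [State.clauses, trailClauses_nil, Set.mem_union,
            Set.mem_insert_iff, Set.mem_empty_iff_false, or_false] at hx ⊢
          tauto
        · exact hall v hv
    | @resolve M Cs c d l hnl hl =>
      -- the Resolution step of Res*(T)
      have hcΓ : c ∈ Γ := hsub (by simp [State.clauses])
      have hdΓ : d ∈ Γ := by
        apply hsub
        simp only [State.clauses, Set.mem_insert_iff, Set.mem_union]
        exact Or.inr (Or.inr ⟨l, Or.inl (by simp)⟩)
      have hres : ResStep S ResRule.resolution Γ (Γ ∪ {resolvent S c d l}) := by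
        have he : resolvent S c d l = d.erase l ∪ c.erase (S.neg l) :=
          Finset.union_comm _ _
        rw [he]
        exact ResStep.resolution hdΓ hcΓ hl hnl
      set Γ₀ : Set (Clause S) := Γ ∪ {resolvent S c d l} with hΓ₀
      have hsub' : State.clauses S (State.conflict M Cs (resolvent S c d l)) ⊆ Γ₀ := by
        intro x hx
        simp only [State.clauses, Set.mem_insert_iff, Set.mem_union] at hx
        rcases hx with rfl | h | h
        · exact Or.inr rfl
        · refine Or.inl (hsub ?_)
          simp only [State.clauses, Set.mem_insert_iff, Set.mem_union]
          exact Or.inr (Or.inl h)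
        · refine Or.inl (hsub ?_)
          simp only [State.clauses, Set.mem_insert_iff, Set.mem_union,
            trailClauses_append]
          exact Or.inr (Or.inr (Or.inl h))
      obtain ⟨Γ', rr, hder, hc1, hc2, hlen, hmono, hall, hU⟩ := ih Γ₀ hsub'
        (fun h => by simp at h)
      refine ⟨Γ', ResRule.resolution :: rr, ResDeriv.step hres hder, ?_, ?_, ?_,
        (Set.subset_union_left).trans hmono, ?_, hU⟩
      · simp only [List.count_cons]
        simp
        omega
      · simpa [List.count_cons] using hc2
      · simpa using Nat.succ_le_succ hlen
      · intro v hv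
        rcases List.mem_cons.mp hv with rfl | hv
        · exact hsub'.trans hmono
        · exact hall v hv
    | @consume1 M Cs c d l h =>
      obtain ⟨Γ', rr, hder, hc1, hc2, hlen, hmono, hall, hU⟩ := ih Γ
        (by
          intro x hx
          apply hsub
          simp only [State.clauses, Set.mem_insert_iff, Set.mem_union,
            trailClauses_append] at hx ⊢
          tauto)
        (fun h => by simp at h)
      refine ⟨Γ', rr, hder, ?_, ?_, ?_, hmono, ?_, hU⟩
      · simpa [List.count_cons] using hc1
      · simpa [List.count_cons] using hc2
      · simpa using Nat.le_succ_of_le hlen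
      · intro v hv
        rcases List.mem_cons.mp hv with rfl | hv
        · intro x hx
          apply hmono; apply hsub
          simp only [State.clauses, Set.mem_insert_iff, Set.mem_union,
            trailClauses_append] at hx ⊢
          tauto
        · exact hall v hv
    | @consume1T M Cs c e l h =>
      obtain ⟨Γ', rr, hder, hc1, hc2, hlen, hmono, hall, hU⟩ := ih Γ
        (by
          intro x hx
          apply hsub
          simp only [State.clauses, Set.mem_insert_iff, Set.mem_union,
            trailClauses_append] at hx ⊢
          tauto)
        (fun h => by simp at h)
      refine ⟨Γ', rr, hder, ?_, ?_, ?_, hmono, ?_, hU⟩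
      · simpa [List.count_cons] using hc1
      · simpa [List.count_cons] using hc2
      · simpa using Nat.le_succ_of_le hlen
      · intro v hv
        rcases List.mem_cons.mp hv with rfl | hv
        · intro x hx
          apply hmono; apply hsub
          simp only [State.clauses, Set.mem_insert_iff, Set.mem_union,
            trailClauses_append] at hx ⊢
          tauto
        · exact hall v hv
    | @consume2 M Cs c l h =>
      obtain ⟨Γ', rr, hder, hc1, hc2, hlen, hmono, hall, hU⟩ := ih Γ
        (by
          intro x hx
          apply hsub
          simp only [State.clauses, Set.mem_insert_iff, Set.mem_union,
            trailClauses_append] at hx ⊢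
          tauto)
        (fun h => by simp at h)
      refine ⟨Γ', rr, hder, ?_, ?_, ?_, hmono, ?_, hU⟩
      · simpa [List.count_cons] using hc1
      · simpa [List.count_cons] using hc2
      · simpa using Nat.le_succ_of_le hlen
      · intro v hv
        rcases List.mem_cons.mp hv with rfl | hv
        · intro x hx
          apply hmono; apply hsub
          simp only [State.clauses, Set.mem_insert_iff, Set.mem_union,
            trailClauses_append] at hx ⊢
          tauto
        · exact hall v hv
    | @backjump M N Cs c l hN hl hfalse hundef =>
      have hsub' : State.clauses S (State.search (M ++ [Elem.prop c l]) Cs) ⊆ Γ := by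
        intro x hx
        apply hsub
        simp only [State.clauses, Set.mem_insert_iff, Set.mem_union,
          trailClauses_append, trailClauses_prop, Set.mem_singleton_iff] at hx ⊢
        tauto
      obtain ⟨Γ', rr, hder, hc1, hc2, hlen, hmono, hall, hU⟩ := ih Γ hsub'
        (fun h => by simp at h)
      refine ⟨Γ', rr, hder, ?_, ?_, ?_, hmono, ?_, hU⟩
      · simpa [List.count_cons] using hc1
      · simpa [List.count_cons] using hc2
      · simpa using Nat.le_succ_of_le hlen
      · intro v hv
        rcases List.mem_cons.mp hv with rfl | hv
        · exact hsub'.trans hmono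
        · exact hall v hv
    | @unsat M Cs =>
      have hE : (∅ : Clause S) ∈ Γ := hsub (by simp [State.clauses])
      obtain ⟨Γ', rr, hder, hc1, hc2, hlen, hmono, hall, hU⟩ := ih Γ
        (by intro x hx; simp [State.clauses] at hx)
        (fun _ => hE)
      refine ⟨Γ', rr, hder, ?_, ?_, ?_, hmono, ?_, hU⟩
      · simpa [List.count_cons] using hc1
      · simpa [List.count_cons] using hc2
      · simpa using Nat.le_succ_of_le hlen
      · intro v hv
        rcases List.mem_cons.mp hv with rfl | hv
        · intro x hx; simp [State.clauses] at hx
        · exact hall v hv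
    | @learn M Cs c h =>
      have hsub' : State.clauses S (State.conflict M (Cs ∪ {c}) c) ⊆ Γ := by
        intro x hx
        apply hsub
        simp only [State.clauses, Set.mem_insert_iff, Set.mem_union,
          Set.mem_singleton_iff] at hx ⊢
        tauto
      obtain ⟨Γ', rr, hder, hc1, hc2, hlen, hmono, hall, hU⟩ := ih Γ hsub'
        (fun h => by simp at h)
      refine ⟨Γ', rr, hder, ?_, ?_, ?_, hmono, ?_, hU⟩
      · simpa [List.count_cons] using hc1
      · simpa [List.count_cons] using hc2
      · simpa using Nat.le_succ_of_le hlen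
      · intro v hv
        rcases List.mem_cons.mp hv with rfl | hv
        · exact hsub'.trans hmono
        · exact hall v hv
    | @tPropagate M Cs e l hB hundef hinf hvalid hle hfalse =>
      have hres : ResStep S ResRule.strong Γ (Γ ∪ {e}) := ResStep.strong hvalid
      set Γ₀ : Set (Clause S) := Γ ∪ {e} with hΓ₀
      have hsub' : State.clauses S (State.search (M ++ [Elem.tprop e l]) Cs) ⊆ Γ₀ := by
        intro x hx
        simp only [State.clauses, Set.mem_union, trailClauses_append,
          trailClauses_tprop, Set.mem_singleton_iff] at hx
        rcases hx with h | h | rfl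
        · exact Or.inl (hsub (Or.inl h))
        · exact Or.inl (hsub (Or.inr h))
        · exact Or.inr rfl
      obtain ⟨Γ', rr, hder, hc1, hc2, hlen, hmono, hall, hU⟩ := ih Γ₀ hsub'
        (fun h => by simp at h)
      refine ⟨Γ', ResRule.strong :: rr, ResDeriv.step hres hder, ?_, ?_, ?_,
        (Set.subset_union_left).trans hmono, ?_, hU⟩
      · simpa [List.count_cons] using hc1
      · simp only [List.count_cons]
        simp
        omega
      · simpa using Nat.succ_le_succ hlen
      · intro v hv
        rcases List.mem_cons.mp hv with rfl | hv
        · exact hsub'.trans hmono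
        · exact hall v hv
    | @tDecide M Cs x a hx hundef hcons =>
      have hsub' : State.clauses S (State.search (M ++ [Elem.tdec x a]) Cs) ⊆ Γ := by
        intro x hx
        apply hsub
        simp only [State.clauses, Set.mem_union, trailClauses_append,
          trailClauses_tdec, Set.mem_empty_iff_false, or_false] at hx ⊢
        tauto
      obtain ⟨Γ', rr, hder, hc1, hc2, hlen, hmono, hall, hU⟩ := ih Γ hsub'
        (fun h => by simp at h)
      refine ⟨Γ', rr, hder, ?_, ?_, ?_, hmono, ?_, hU⟩
      · simpa [List.count_cons] using hc1
      · simpa [List.count_cons] using hc2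
      · simpa using Nat.le_succ_of_le hlen
      · intro v hv
        rcases List.mem_cons.mp hv with rfl | hv
        · exact hsub'.trans hmono
        · exact hall v hv
    | @tConflict M Cs e hinf hvalid hfalse =>
      have hres : ResStep S ResRule.strong Γ (Γ ∪ {e}) := ResStep.strong hvalid
      set Γ₀ : Set (Clause S) := Γ ∪ {e} with hΓ₀
      have hsub' : State.clauses S (State.conflict M Cs e) ⊆ Γ₀ := by
        intro x hx
        simp only [State.clauses, Set.mem_insert_iff, Set.mem_union] at hx
        rcases hx with rfl | h | h
        · exact Or.inr rfl
        · exact Or.inl (hsub (Or.inl h))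
        · exact Or.inl (hsub (Or.inr h))
      obtain ⟨Γ', rr, hder, hc1, hc2, hlen, hmono, hall, hU⟩ := ih Γ₀ hsub'
        (fun h => by simp at h)
      refine ⟨Γ', ResRule.strong :: rr, ResDeriv.step hres hder, ?_, ?_, ?_,
        (Set.subset_union_left).trans hmono, ?_, hU⟩
      · simpa [List.count_cons] using hc1
      · simp only [List.count_cons]
        simp
        omega
      · simpa using Nat.succ_le_succ hlen
      · intro v hv
        rcases List.mem_cons.mp hv with rfl | hv
        · exact hsub'.trans hmono
        · exact hall v hv
    | @tConsume M Cs c x a hfalse =>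
      have hsub' : State.clauses S (State.conflict M Cs c) ⊆ Γ := by
        intro x hx
        apply hsub
        simp only [State.clauses, Set.mem_insert_iff, Set.mem_union,
          trailClauses_append, trailClauses_tdec, Set.mem_empty_iff_false,
          or_false] at hx ⊢
        tauto
      obtain ⟨Γ', rr, hder, hc1, hc2, hlen, hmono, hall, hU⟩ := ih Γ hsub'
        (fun h => by simp at h)
      refine ⟨Γ', rr, hder, ?_, ?_, ?_, hmono, ?_, hU⟩
      · simpa [List.count_cons] using hc1
      · simpa [List.count_cons] using hc2
      · simpa using Nat.le_succ_of_le hlen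
      · intro v hv
        rcases List.mem_cons.mp hv with rfl | hv
        · exact hsub'.trans hmono
        · exact hall v hv
    | @tBackjumpDecide M N Cs c x a l hl hundef hother =>
      have hsub' : State.clauses S (State.search (M ++ [Elem.dec l]) Cs) ⊆ Γ := by
        intro y hy
        apply hsub
        simp only [State.clauses, Set.mem_insert_iff, Set.mem_union,
          trailClauses_append, trailClauses_dec, trailClauses_tdec,
          Set.mem_empty_iff_false, or_false] at hy ⊢
        tauto
      obtain ⟨Γ', rr, hder, hc1, hc2, hlen, hmono, hall, hU⟩ := ih Γ hsub'
        (fun h => by simp at h)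
      refine ⟨Γ', rr, hder, ?_, ?_, ?_, hmono, ?_, hU⟩
      · simpa [List.count_cons] using hc1
      · simpa [List.count_cons] using hc2
      · simpa using Nat.le_succ_of_le hlen
      · intro v hv
        rcases List.mem_cons.mp hv with rfl | hv
        · exact hsub'.trans hmono
        · exact hall v hv

/-- Res*(T) polynomially simulates MCSAT: for every MCSAT
derivation from the initial state `⟨[], 𝒞₀⟩`, there is a Res*(T) derivation
from `𝒞₀` whose length is at most the number of MCSAT rule applications,
such that every clause that occurs in any state of the MCSAT derivation (in
the clause set, on the trail as a propagation reason, or as conflict clause)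
belongs to `𝒞₀` or is derived by the Res*(T) derivation; the simulation uses
one Resolution step per MCSAT `Resolve` step and one Strong Theory Derivation
step per MCSAT `T-Propagate` or `T-Conflict` step, and no steps for any other
MCSAT rule.  In particular, if the MCSAT derivation ends with the `Unsat`
rule (applicable only when the conflict clause is the empty clause), the
Res*(T) derivation derives the empty clause. -/
theorem resStarT_simulates_mcsat (S : Sig)
    (C0 : Set (Clause S)) (rs : List Rule) (sts : List (State S)) (t : State S)
    (htrace : Trace S C0 (State.search ([] : Trail S) C0) rs sts t) :
    ∃ (Γ : Set (Clause S)) (rr : List ResRule),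
      ResDeriv S C0 rr Γ ∧
      -- one Resolution per Resolve, one Strong Theory Derivation per
      -- T-Propagate or T-Conflict, no steps for other rules:
      rr.count ResRule.resolution = rs.count Rule.resolve ∧
      rr.count ResRule.strong = rs.count Rule.tPropagate + rs.count Rule.tConflict ∧
      rr.length ≤ rs.length ∧
      -- every clause occurring in any state of the MCSAT derivation is
      -- available (initial or derived):
      (∀ s ∈ State.search ([] : Trail S) C0 :: sts, State.clauses S s ⊆ Γ) ∧
      -- if the MCSAT derivation ends with Unsat, Res*(T) derives the empty clause:
      (t = (State.unsat : State S) → (∅ : Clause S) ∈ Γ) := by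
  have hsub : State.clauses S (State.search ([] : Trail S) C0) ⊆ C0 := by
    intro x hx
    simpa [State.clauses, trailClauses_nil] using hx
  obtain ⟨Γ', rr, hder, hc1, hc2, hlen, hmono, hall, hU⟩ :=
    sim_aux S C0 htrace C0 hsub (fun h => by simp at h)
  refine ⟨Γ', rr, hder, hc1, hc2, hlen, ?_, hU⟩
  intro s hs
  rcases List.mem_cons.mp hs with rfl | hs
  · exact hsub.trans hmono
  · exact hall s hs

end MCSATPaper
end

section
/- The following invariant is preserved by every MCSAT rule application during the Res*(T) simulation of an MCSAT derivation: after each MCSAT step, the set of clauses derived so far by the Res*(T) derivation (together with the initial clauses 𝒞₀) contains the current MCSAT clause set 𝒞, every clause occurring as the reason of a Boolean propagation on the current trail M, and, if the current state is a conflict state ⟨M,𝒞⟩ ⊩ C, the current conflict clause C. -/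
/-
Shared formalization of the MCSAT transition system (de Moura–Jovanović,
extended with a Restart rule) and of the Res*(T) proof system (Robere et al.),
following "On the proof complexity of MCSAT".
-/

namespace MCSATPaper

variable (S : Sig)

/-- The simulation invariant is preserved by every MCSAT rule
application: suppose that the set `Γ` of clauses derived so far by the
Res*(T) derivation (together with the initial clauses `𝒞₀`) contains the
current MCSAT clause set, every clause occurring as the reason of a
propagation on the current trail, and the current conflict clause (if the
current state is a conflict state).  Then after one further MCSAT step the
same holds again, where for a `Resolve` step `Γ` is extended by one
Resolution step, for a `T-Propagate` or `T-Conflict` step `Γ` is extended by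
one Strong Theory Derivation step, and for every other rule `Γ` is left
unchanged. -/
theorem simulation_invariant_preserved (S : Sig)
    (C0 Γ : Set (Clause S)) (r : Rule) (s t : State S)
    (hstep : Step S C0 r s t)
    (hC0 : C0 ⊆ Γ) (hinv : State.clauses S s ⊆ Γ) :
    (r ≠ Rule.resolve → r ≠ Rule.tPropagate → r ≠ Rule.tConflict →
      State.clauses S t ⊆ Γ) ∧
    (r = Rule.resolve →
      ∃ Γ' : Set (Clause S),
        ResStep S ResRule.resolution Γ Γ' ∧ State.clauses S t ⊆ Γ') ∧
    ((r = Rule.tPropagate ∨ r = Rule.tConflict) →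
      ∃ Γ' : Set (Clause S),
        ResStep S ResRule.strong Γ Γ' ∧ State.clauses S t ⊆ Γ') := by
  have tc_append : ∀ (M N : Trail S), trailClauses S (M ++ N) = trailClauses S M ∪ trailClauses S N := by
    intro M N
    ext x
    simp only [trailClauses, Set.mem_setOf_eq, List.mem_append, Set.mem_union]
    aesop
  cases hstep with
  | decide hB hundef =>
    refine ⟨fun _ _ _ x hx => hinv ?_, fun h => by simp at h, fun h => by rcases h with h|h <;> simp at h⟩
    simp only [State.clauses, tc_append, trailClauses, Set.mem_union, Set.mem_setOf_eq] at hx ⊢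
    aesop
  | propagate hc hl hfalse hundef =>
    refine ⟨fun _ _ _ x hx => hinv ?_, fun h => by simp at h, fun h => by rcases h with h|h <;> simp at h⟩
    simp only [State.clauses, tc_append, trailClauses, Set.mem_union, Set.mem_setOf_eq] at hx ⊢
    aesop
  | conflict hc hfalse =>
    refine ⟨fun _ _ _ x hx => hinv ?_, fun h => by simp at h, fun h => by rcases h with h|h <;> simp at h⟩
    simp only [State.clauses, Set.mem_insert_iff, Set.mem_union] at hx ⊢
    aesop
  | sat hcomp hsat =>
    refine ⟨fun _ _ _ x hx => hinv ?_, fun h => by simp at h, fun h => by rcases h with h|h <;> simp at h⟩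
    simp [State.clauses] at hx
  | forget hc hlearned =>
    refine ⟨fun _ _ _ x hx => hinv ?_, fun h => by simp at h, fun h => by rcases h with h|h <;> simp at h⟩
    simp only [State.clauses, Set.mem_union, Set.mem_diff] at hx ⊢
    aesop
  | restart =>
    refine ⟨fun _ _ _ x hx => hinv ?_, fun h => by simp at h, fun h => by rcases h with h|h <;> simp at h⟩
    simp only [State.clauses, trailClauses, Set.mem_insert_iff, Set.mem_union, Set.mem_setOf_eq,
      List.not_mem_nil] at hx ⊢
    aesop
  | @resolve M Cs c d l hnl hl =>
    refine ⟨fun h _ _ => absurd rfl h, fun _ => ?_, fun h => by rcases h with h|h <;> simp at h⟩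
    have hcΓ : c ∈ Γ := hinv (by simp [State.clauses])
    have hdΓ : d ∈ Γ := by
      apply hinv
      simp only [State.clauses, Set.mem_insert_iff, Set.mem_union, trailClauses, Set.mem_setOf_eq]
      exact Or.inr (Or.inr ⟨l, Or.inl (by simp)⟩)
    refine ⟨Γ ∪ {d.erase l ∪ c.erase (S.neg l)}, ResStep.resolution hdΓ hcΓ hl hnl, ?_⟩
    intro x hx
    simp only [State.clauses, Set.mem_insert_iff, Set.mem_union, Set.mem_singleton_iff] at hx ⊢
    rcases hx with rfl | hx
    · right
      simp [resolvent, Finset.union_comm]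
    · left
      apply hinv
      simp only [State.clauses, Set.mem_insert_iff, Set.mem_union, tc_append] at hx ⊢
      tauto
  | consume1 h =>
    refine ⟨fun _ _ _ x hx => hinv ?_, fun h => by simp at h, fun h => by rcases h with h|h <;> simp at h⟩
    simp only [State.clauses, Set.mem_insert_iff, Set.mem_union, tc_append] at hx ⊢
    tauto
  | consume1T h =>
    refine ⟨fun _ _ _ x hx => hinv ?_, fun h => by simp at h, fun h => by rcases h with h|h <;> simp at h⟩
    simp only [State.clauses, Set.mem_insert_iff, Set.mem_union, tc_append] at hx ⊢
    tauto
  | consume2 h =>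
    refine ⟨fun _ _ _ x hx => hinv ?_, fun h => by simp at h, fun h => by rcases h with h|h <;> simp at h⟩
    simp only [State.clauses, Set.mem_insert_iff, Set.mem_union, tc_append] at hx ⊢
    tauto
  | backjump hN hl hfalse hundef =>
    refine ⟨fun _ _ _ x hx => hinv ?_, fun h => by simp at h, fun h => by rcases h with h|h <;> simp at h⟩
    simp only [State.clauses, Set.mem_insert_iff, Set.mem_union, tc_append, trailClauses,
      Set.mem_setOf_eq] at hx ⊢
    aesop
  | unsat =>
    refine ⟨fun _ _ _ x hx => hinv ?_, fun h => by simp at h, fun h => by rcases h with h|h <;> simp at h⟩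
    simp [State.clauses] at hx
  | learn h =>
    refine ⟨fun _ _ _ x hx => hinv ?_, fun h => by simp at h, fun h => by rcases h with h|h <;> simp at h⟩
    simp only [State.clauses, Set.mem_insert_iff, Set.mem_union, Set.union_singleton] at hx ⊢
    tauto
  | @tPropagate M Cs e l hB hundef hinf hvalid hle hfalse =>
    refine ⟨fun _ h _ => absurd rfl h, fun h => by simp at h, fun _ => ?_⟩
    refine ⟨Γ ∪ {e}, ResStep.strong hvalid, ?_⟩
    intro x hx
    simp only [State.clauses, Set.mem_union, tc_append, trailClauses, Set.mem_setOf_eq,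
      Set.mem_singleton_iff, List.mem_append, List.mem_singleton] at hx ⊢
    rcases hx with hx | ⟨l', (h' | h') | (h' | h')⟩
    · exact Or.inl (hinv (Or.inl hx))
    · exact Or.inl (hinv (Or.inr ⟨l', Or.inl h'⟩))
    · simp at h'
    · exact Or.inl (hinv (Or.inr ⟨l', Or.inr h'⟩))
    · exact Or.inr (Elem.tprop.inj h').1
  | tDecide hx hundef hcons =>
    refine ⟨fun _ _ _ x hx => hinv ?_, fun h => by simp at h, fun h => by rcases h with h|h <;> simp at h⟩
    simp only [State.clauses, Set.mem_union, tc_append, trailClauses, Set.mem_setOf_eq] at hx ⊢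
    aesop
  | @tConflict M Cs e hinf hvalid hfalse =>
    refine ⟨fun _ _ h => absurd rfl h, fun h => by simp at h, fun _ => ?_⟩
    refine ⟨Γ ∪ {e}, ResStep.strong hvalid, ?_⟩
    intro x hx
    simp only [State.clauses, Set.mem_insert_iff, Set.mem_union, Set.mem_singleton_iff] at hx ⊢
    rcases hx with rfl | hx
    · exact Or.inr rfl
    · exact Or.inl (hinv hx)
  | tConsume hfalse =>
    refine ⟨fun _ _ _ x hx => hinv ?_, fun h => by simp at h, fun h => by rcases h with h|h <;> simp at h⟩
    simp only [State.clauses, Set.mem_insert_iff, Set.mem_union, tc_append] at hx ⊢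
    tauto
  | tBackjumpDecide hl hundef hother =>
    refine ⟨fun _ _ _ x hx => hinv ?_, fun h => by simp at h, fun h => by rcases h with h|h <;> simp at h⟩
    simp only [State.clauses, Set.mem_insert_iff, Set.mem_union, tc_append, trailClauses,
      Set.mem_setOf_eq] at hx ⊢
    aesop

end MCSATPaper
end
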